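/- Let H be a connected graded commutative Hopf algebra, V a commutative algebra, Φ : H → V an algebra map, and R : V → V an idempotent algebra endomorphism. Let B₊ be a Hochschild 1-cocycle on H and define S_R^Φ as the twisted antipode: S_R^Φ(𝟙) = 𝟙, S_R^Φ = −R ∘ m_V ∘ (S_R^Φ ⊗ Φ) ∘ Q ∘ Δ. Then the renormalized value satisfies (S_R^Φ ⋆ Φ) ∘ B₊ = (id_V − R) ∘ m_V ∘ (S_R^Φ ⊗ Φ ∘ B₊) ∘ Δ; i.e., the Bogoliubov recursion: for every x ∈ H, (S_R^Φ ⋆ Φ)(B₊(x)) = (id − R)(Σ S_R^Φ(x_{(1)}) Φ(B₊(x_{(2)}))). -/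
import Mathlib


open TensorProduct

variable {k H V : Type} [Field k] [CommRing H] [HopfAlgebra k H]
  [CommRing V] [Algebra k V]

/-- `𝟙ε : H → H`. -/
noncomputable def unitCounit (k H : Type) [Field k] [CommRing H] [HopfAlgebra k H] :
    H →ₗ[k] H :=
  Algebra.linearMap k H ∘ₗ Coalgebra.counit

/-- The projection `P = id − 𝟙ε` onto the augmentation ideal. -/
noncomputable def augProj (k H : Type) [Field k] [CommRing H] [HopfAlgebra k H] :
    H →ₗ[k] H :=
  LinearMap.id - unitCounit k H

/-- The map `Q : H ⊗ H → H ⊗ H`, equal to `id ⊗ P` away from `k𝟙 ⊗ k𝟙` and with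
`Q(𝟙 ⊗ 𝟙) = −𝟙 ⊗ 𝟙`. -/
noncomputable def Qmap (k H : Type) [Field k] [CommRing H] [HopfAlgebra k H] :
    H ⊗[k] H →ₗ[k] H ⊗[k] H :=
  LinearMap.lTensor H (augProj k H) -
    TensorProduct.map (unitCounit k H) (unitCounit k H)

/-- Hopf-algebraic Bogoliubov recursion: for a Hochschild 1-cocycle `B₊` on a connected
graded commutative Hopf algebra `H`, Feynman rules `Φ : H → V`, an idempotent algebra
endomorphism `R` of `V`, and the twisted antipode `S` (`S(𝟙) = 𝟙`,
`S = −R ∘ m_V ∘ (S ⊗ Φ) ∘ Q ∘ Δ` on the augmentation ideal), the renormalized value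
satisfies `(S ⋆ Φ)(B₊(x)) = (id − R)(Σ S(x₍₁₎) Φ(B₊(x₍₂₎)))` for every `x ∈ H`. -/
theorem stmt_19 (Bp : H →ₗ[k] H)
    (hB : ∀ x : H, Coalgebra.comul (R := k) (Bp x) =
      TensorProduct.map LinearMap.id Bp (Coalgebra.comul x) + Bp x ⊗ₜ[k] 1)
    (hBe : ∀ x : H, Coalgebra.counit (R := k) (Bp x) = 0)
    (Φ : H →ₐ[k] V) (Ren : V →ₐ[k] V) (hRen : Ren.comp Ren = Ren)
    (S : H →ₗ[k] V) (hS1 : S 1 = 1)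
    (hS : ∀ x : H, Coalgebra.counit (R := k) x = 0 →
      S x = - Ren (LinearMap.mul' k V
        (TensorProduct.map S Φ.toLinearMap (Qmap k H (Coalgebra.comul x))))) :
    ∀ x : H,
      LinearMap.mul' k V
          (TensorProduct.map S Φ.toLinearMap (Coalgebra.comul (Bp x))) =
        LinearMap.mul' k V
            (TensorProduct.map S (Φ.toLinearMap ∘ₗ Bp) (Coalgebra.comul x)) -
          Ren (LinearMap.mul' k V
            (TensorProduct.map S (Φ.toLinearMap ∘ₗ Bp) (Coalgebra.comul x))) := by
  intro x
  set C : H ⊗[k] H := Coalgebra.comul (R := k) x with hC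
  -- composition identities
  have e0 : TensorProduct.map S (Φ.toLinearMap ∘ₗ Bp) =
      TensorProduct.map S Φ.toLinearMap ∘ₗ TensorProduct.map LinearMap.id Bp := by
    rw [← TensorProduct.map_comp]; rfl
  have e1 : LinearMap.lTensor H (augProj k H) ∘ₗ TensorProduct.map LinearMap.id Bp =
      TensorProduct.map LinearMap.id Bp := by
    ext a b
    simp [augProj, unitCounit, hBe b]
  have e2 : TensorProduct.map (unitCounit k H) (unitCounit k H) ∘ₗ
      TensorProduct.map LinearMap.id Bp = 0 := by
    ext a b
    simp [unitCounit, hBe b]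
  have hQ : Qmap k H (Coalgebra.comul (R := k) (Bp x)) =
      TensorProduct.map LinearMap.id Bp C := by
    rw [hB x]
    simp only [Qmap, LinearMap.sub_apply, map_add]
    have h1 : LinearMap.lTensor H (augProj k H)
        (TensorProduct.map LinearMap.id Bp C) = TensorProduct.map LinearMap.id Bp C :=
      congrFun (congrArg DFunLike.coe e1) C
    have h2 : TensorProduct.map (unitCounit k H) (unitCounit k H)
        (TensorProduct.map LinearMap.id Bp C) = 0 := by
      have := congrFun (congrArg DFunLike.coe e2) C
      simpa using this
    have h3 : LinearMap.lTensor H (augProj k H) (Bp x ⊗ₜ[k] (1 : H)) = 0 := by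
      simp [augProj, unitCounit, Bialgebra.counit_one]
    have h4 : TensorProduct.map (unitCounit k H) (unitCounit k H)
        (Bp x ⊗ₜ[k] (1 : H)) = 0 := by
      simp [unitCounit, hBe x]
    rw [h1, h2, h3, h4]
    simp
  set T : V := LinearMap.mul' k V
      (TensorProduct.map S (Φ.toLinearMap ∘ₗ Bp) C) with hT
  have hSB : S (Bp x) = - Ren T := by
    rw [hS (Bp x) (hBe x), hQ, hT, e0]
    rfl
  have hT' : T = LinearMap.mul' k V
      (TensorProduct.map S Φ.toLinearMap (TensorProduct.map LinearMap.id Bp C)) := by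
    rw [hT, e0]; rfl
  rw [hB x]
  simp only [map_add, LinearMap.mul'_apply, TensorProduct.map_tmul]
  rw [← hC, ← hT', hSB]
  simp
  ring
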